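/- Let p be an odd prime, A' = {−(p−1)/2, …, (p−1)/2} ⊆ Z/p²Z, k ≥ 1, and let r = n'_k((p−1)/2) be the number of ordered k-tuples from A' summing to (p−1)/2 in Z/p²Z. Then Σ_{x ∈ Z/p²Z} min(r, n'_k(x)) = rp + Σ_{x ∉ A'} n'_k(x). -/

import Mathlib

/-!
Write `p = 2t + 1`, so that `A' = {-t, …, t}`. The function `n'_{k+1}` is the convolution of `n'_k`
with the indicator of `A'`, and this convolution preserves the property of being symmetric and
nonincreasing in the distance `|x|` from `x` to `0` in `ZMod (p ^ 2)`: moving the window from `w` to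
`w + 1` trades the value at `w - t` for the value at `w + 1 + t`, which is no closer to `0` since the
window never wraps around. Starting from the Dirac mass at `0`, every `n'_k` has this property, so
`n'_k ≥ n'_k(t) = r` on `A'` and `n'_k ≤ r` off `A'`, which splits the sum of minima.
-/

open Finset

section TupleSumCount
variable {G : Type*} [AddCommGroup G] [DecidableEq G]

def tupleSumCount (S : Finset G) (k : ℕ) (z : G) : ℕ :=
  #{f ∈ Fintype.piFinset fun _ : Fin k => S | ∑ i, f i = z}

lemma tupleSumCount_zero (S : Finset G) (z : G) :
    tupleSumCount S 0 z = if z = 0 then 1 else 0 := by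
  simp [tupleSumCount, eq_comm, apply_ite card]

lemma tupleSumCount_succ (S : Finset G) (k : ℕ) (z : G) :
    tupleSumCount S (k + 1) z = ∑ a ∈ S, tupleSumCount S k (z - a) := by
  have hpi : (Fintype.piFinset fun _ : Fin (k + 1) => S) =
      (S ×ˢ Fintype.piFinset fun _ : Fin k => S).map (Fin.consEquiv fun _ => G).toEmbedding := by
    have h := filter_piFinset_eq_map_consEquiv (fun _ : Fin (k + 1) => S) fun _ => True
    simp only [filter_true] at h
    exact h
  simp only [tupleSumCount, card_filter, hpi, sum_map, sum_product]
  refine sum_congr rfl fun a _ => sum_congr rfl fun g _ => ?_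
  simp [Fin.sum_cons, eq_sub_iff_add_eq']

end TupleSumCount

section Unimodal
variable {N : ℕ} {M : Type*}

def IsSymmUnimodal [Preorder M] (f : ZMod N → M) : Prop :=
  ∀ x y : ZMod N, x.valMinAbs.natAbs ≤ y.valMinAbs.natAbs → f y ≤ f x

lemma IsSymmUnimodal.of_natCast [NeZero N] [Preorder M] {f : ZMod N → M}
    (hneg : ∀ x, f (-x) = f x) (hmono : ∀ m m' : ℕ, m ≤ m' → m' ≤ N / 2 → f m' ≤ f m) :
    IsSymmUnimodal f := by
  have hdist (z : ZMod N) : f z = f (z.valMinAbs.natAbs : ℕ) := by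
    rw [ZMod.natCast_natAbs_valMinAbs]
    split_ifs <;> simp [hneg]
  intro x y hxy
  rw [hdist x, hdist y]
  exact hmono _ _ hxy (ZMod.natAbs_valMinAbs_le y)

lemma isSymmUnimodal_ite_eq_zero [Preorder M] [Zero M] {c : M} (hc : 0 ≤ c) :
    IsSymmUnimodal fun x : ZMod N => if x = 0 then c else 0 := by
  intro x y hxy
  by_cases hy : y = 0
  · subst hy
    simp_all
  · simp only [hy, if_false]
    split_ifs
    exacts [hc, le_rfl]

/-- The convolution of `f` with the indicator of `{-t, …, t}`. -/
def windowSum [AddCommMonoid M] (t : ℕ) (f : ZMod N → M) (w : ZMod N) : M :=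
  ∑ j ∈ range (2 * t + 1), f (w + t - j)

variable [AddCommMonoid M] {f : ZMod N → M}

lemma windowSum_neg (hf : ∀ x, f (-x) = f x) (t : ℕ) (w : ZMod N) :
    windowSum t f (-w) = windowSum t f w := by
  rw [windowSum, ← sum_range_reflect]
  refine sum_congr rfl fun j hj => ?_
  rw [← hf, Nat.cast_sub (by simp at hj; omega)]
  push_cast
  ring_nf

lemma windowSum_natCast_succ_add (t m : ℕ) :
    windowSum t f (m + 1 : ℕ) + f (m - t) = windowSum t f m + f (m + 1 + t) := by
  have h := sum_range_succ (fun j => f ((m + 1 : ℕ) + t - j)) (2 * t + 1)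
  rw [sum_range_succ'] at h
  simp only [windowSum]
  convert h.symm using 2 <;> push_cast <;> ring_nf

lemma natAbs_valMinAbs_sub_le [NeZero N] {t m : ℕ} (ht : 2 * t < N) (hm : m + 1 ≤ N / 2) :
    ((m : ZMod N) - t).valMinAbs.natAbs ≤ ((m : ZMod N) + 1 + t).valMinAbs.natAbs := by
  have h1 : ((m : ZMod N) - t).valMinAbs = (m : ℤ) - t := by
    rw [ZMod.valMinAbs_spec]
    refine ⟨by push_cast; rfl, ?_, ?_⟩ <;> omega
  have h2 : ((m : ZMod N) + 1 + t) = ((m + 1 + t : ℕ) : ZMod N) := by push_cast; rfl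
  rw [h1, h2, ZMod.valMinAbs_natAbs_eq_min, ZMod.val_natCast, Nat.mod_eq_of_lt (by omega)]
  omega

lemma IsSymmUnimodal.windowSum [PartialOrder M] [IsOrderedCancelAddMonoid M] [NeZero N]
    (hf : IsSymmUnimodal f) {t : ℕ} (ht : 2 * t < N) : IsSymmUnimodal (windowSum t f) := by
  have hneg (x : ZMod N) : f (-x) = f x :=
    le_antisymm (hf _ _ (by simp)) (hf _ _ (by simp))
  refine .of_natCast (windowSum_neg hneg t) fun m m' hmm' hm' => ?_
  induction m', hmm' using Nat.le_induction with
  | base => exact le_rfl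
  | succ m' hmm' ih =>
    refine le_trans ?_ (ih (by omega))
    have hstep := windowSum_natCast_succ_add (f := f) t m'
    have hcmp : f (m' + 1 + t) ≤ f (m' - t) := hf _ _ (natAbs_valMinAbs_sub_le ht hm')
    refine le_of_add_le_add_right (a := f (m' - t)) ?_
    calc _ = _ := hstep
      _ ≤ _ := by gcongr

end Unimodal

section CenteredInterval
variable {N : ℕ} [NeZero N] {t : ℕ}

noncomputable def centeredInterval (N t : ℕ) : Finset (ZMod N) :=
  (Icc (-(t : ℤ)) t).image fun i : ℤ => (i : ZMod N)

lemma valMinAbs_intCast_of_natAbs_le (ht : 2 * t < N) {i : ℤ} (hi : i.natAbs ≤ t) :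
    (i : ZMod N).valMinAbs = i :=
  (ZMod.valMinAbs_spec _ _).2 ⟨rfl, by omega, by omega⟩

lemma injOn_intCast_Icc (ht : 2 * t < N) :
    Set.InjOn (fun i : ℤ => (i : ZMod N)) (Icc (-(t : ℤ)) t) := by
  intro i hi j hj hij
  simp only [coe_Icc, Set.mem_Icc] at hi hj
  rw [← valMinAbs_intCast_of_natAbs_le (N := N) ht (i := i) (by omega),
    ← valMinAbs_intCast_of_natAbs_le (N := N) ht (i := j) (by omega)]
  exact congrArg ZMod.valMinAbs hij

lemma mem_centeredInterval (ht : 2 * t < N) {x : ZMod N} :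
    x ∈ centeredInterval N t ↔ x.valMinAbs.natAbs ≤ t := by
  constructor
  · intro hx
    obtain ⟨i, hi, rfl⟩ := mem_image.1 hx
    rw [mem_Icc] at hi
    rw [valMinAbs_intCast_of_natAbs_le ht (by omega)]
    omega
  · intro hx
    exact mem_image.2 ⟨x.valMinAbs, mem_Icc.2 (by omega), ZMod.coe_valMinAbs x⟩

lemma card_centeredInterval (ht : 2 * t < N) : #(centeredInterval N t) = 2 * t + 1 := by
  rw [centeredInterval, card_image_of_injOn (injOn_intCast_Icc ht), Int.card_Icc]
  omega

lemma sum_centeredInterval {M : Type*} [AddCommMonoid M] (ht : 2 * t < N) (g : ZMod N → M) :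
    ∑ a ∈ centeredInterval N t, g a = ∑ j ∈ range (2 * t + 1), g (j - t) := by
  rw [centeredInterval, sum_image (injOn_intCast_Icc ht)]
  refine sum_nbij' (fun i => (i + t).toNat) (fun j => j - t) ?_ ?_ ?_ ?_ ?_
  all_goals intro i hi
  all_goals simp only [mem_Icc, mem_range] at hi ⊢
  · omega
  · omega
  · omega
  · omega
  · rw [← Int.cast_natCast, Int.toNat_of_nonneg (by omega), Int.cast_add, Int.cast_natCast,
      add_sub_cancel_right]

lemma tupleSumCount_centeredInterval_succ (ht : 2 * t < N) (k : ℕ) :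
    tupleSumCount (centeredInterval N t) (k + 1) =
      windowSum t (tupleSumCount (centeredInterval N t) k) := by
  funext z
  rw [tupleSumCount_succ, sum_centeredInterval ht, windowSum]
  simp only [sub_sub_eq_add_sub]

lemma isSymmUnimodal_tupleSumCount_centeredInterval (ht : 2 * t < N) (k : ℕ) :
    IsSymmUnimodal (tupleSumCount (centeredInterval N t) k) := by
  induction k with
  | zero =>
    rw [funext (tupleSumCount_zero _)]
    exact isSymmUnimodal_ite_eq_zero zero_le_one
  | succ k ih =>
    rw [tupleSumCount_centeredInterval_succ ht]
    exact ih.windowSum ht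

end CenteredInterval

lemma sum_min_eq_card_nsmul_add_sum_sdiff {α M : Type*} [Fintype α] [DecidableEq α]
    [AddCommMonoid M] [LinearOrder M] {A : Finset α} {g : α → M} {r : M}
    (hA : ∀ x ∈ A, r ≤ g x) (hAc : ∀ x ∉ A, g x ≤ r) :
    ∑ x, min r (g x) = #A • r + ∑ x ∈ univ \ A, g x := by
  rw [← sum_sdiff (subset_univ A), add_comm, sum_congr rfl fun x hx => min_eq_left (hA x hx),
    sum_const, sum_congr rfl fun x hx => min_eq_right (hAc x (mem_sdiff.1 hx).2)]

theorem balanced_min_sum_identity_general (p : ℕ) [NeZero p] (hodd : Odd p)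
    (k : ℕ)
    (A' : Finset (ZMod (p ^ 2)))
    (hA' : A' = (Finset.Icc (-(((p : ℤ) - 1) / 2)) (((p : ℤ) - 1) / 2)).image
      (fun i : ℤ => (i : ZMod (p ^ 2))))
    (n' : ZMod (p ^ 2) → ℕ)
    (hn' : ∀ z, n' z = ((Fintype.piFinset (fun _ : Fin k => A')).filter
      (fun f => ∑ i, f i = z)).card)
    (r : ℕ) (hr : r = n' (((((p : ℤ) - 1) / 2) : ℤ) : ZMod (p ^ 2))) :
    ∑ x : ZMod (p ^ 2), min r (n' x) =
      r * p + ∑ x ∈ Finset.univ \ A', n' x := by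
  obtain ⟨t, hpt⟩ := hodd
  have hhalf : ((p : ℤ) - 1) / 2 = t := by omega
  have ht : 2 * t < p ^ 2 := by nlinarith
  rw [hhalf] at hA' hr
  have hA : A' = centeredInterval (p ^ 2) t := hA'
  have hn : n' = tupleSumCount A' k := funext hn'
  have hf := isSymmUnimodal_tupleSumCount_centeredInterval ht k
  rw [← hA, ← hn] at hf
  have hrt : r = n' t := by rw [hr, Int.cast_natCast]
  have hdist : ((t : ZMod (p ^ 2))).valMinAbs.natAbs = t := by
    rw [ZMod.valMinAbs_natCast_of_le_half (by omega), Int.natAbs_natCast]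
  rw [sum_min_eq_card_nsmul_add_sum_sdiff (A := A'), hA, card_centeredInterval ht, smul_eq_mul,
    ← hpt, mul_comm]
  · intro x hx
    rw [hA, mem_centeredInterval ht] at hx
    exact hrt ▸ hf _ _ (hdist.trans_ge hx)
  · intro x hx
    rw [hA, mem_centeredInterval ht] at hx
    exact hrt ▸ hf _ _ (by omega)

theorem balanced_min_sum_identity (p : ℕ) [NeZero p] (hp : p.Prime) (hodd : Odd p)
    (k : ℕ) (hk : 1 ≤ k)
    (A' : Finset (ZMod (p ^ 2)))
    (hA' : A' = (Finset.Icc (-(((p : ℤ) - 1) / 2)) (((p : ℤ) - 1) / 2)).image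
      (fun i : ℤ => (i : ZMod (p ^ 2))))
    (n' : ZMod (p ^ 2) → ℕ)
    (hn' : ∀ z, n' z = ((Fintype.piFinset (fun _ : Fin k => A')).filter
      (fun f => ∑ i, f i = z)).card)
    (r : ℕ) (hr : r = n' (((((p : ℤ) - 1) / 2) : ℤ) : ZMod (p ^ 2))) :
    ∑ x : ZMod (p ^ 2), min r (n' x) =
      r * p + ∑ x ∈ Finset.univ \ A', n' x :=
  balanced_min_sum_identity_general p hodd k A' hA' n' hn' r hr
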